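/- arXiv:2401.13975 — 6 statements merged into one kernel-verified Lean document; each statement's English description precedes it below -/
import Mathlib

section
/- Let N be a positive integer, let Σ₀ ∈ ℂ^{N×N} be Hermitian and invertible, let a ∈ ℂ^N, let γ ∈ ℝ, and suppose that Σ := Σ₀ + γ·(a aᴴ) is invertible, that 1 + γ·(aᴴ Σ₀⁻¹ a) ≠ 0, and that aᴴ Σ₀⁻¹ a ≠ 0 and aᴴ Σ⁻¹ a ≠ 0. Then for every matrix S ∈ ℂ^{N×N}, (aᴴ Σ₀⁻¹ S Σ₀⁻¹ a) / (aᴴ Σ₀⁻¹ a)² = (aᴴ Σ⁻¹ S Σ⁻¹ a) / (aᴴ Σ⁻¹ a)². -/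
open Matrix

/-- Invariance of the ratio `aᴴ Θ S Θ a / (aᴴ Θ a)²` under the rank-one update
`Σ = Σ₀ + γ a aᴴ` (used in the proof of Lemma 1 of the paper). -/
theorem stmt_3 (N : ℕ) (hN : 0 < N)
    (Sig0 : Matrix (Fin N) (Fin N) ℂ) (hherm : Sig0.IsHermitian) (hSig0 : IsUnit Sig0.det)
    (a : Fin N → ℂ) (γ : ℝ)
    (hSig : IsUnit (Sig0 + (γ : ℂ) • vecMulVec a (star a)).det)
    (hden : 1 + (γ : ℂ) * (star a ⬝ᵥ (Sig0⁻¹ *ᵥ a)) ≠ 0)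
    (ha0 : star a ⬝ᵥ (Sig0⁻¹ *ᵥ a) ≠ 0)
    (ha : star a ⬝ᵥ ((Sig0 + (γ : ℂ) • vecMulVec a (star a))⁻¹ *ᵥ a) ≠ 0) :
    ∀ S : Matrix (Fin N) (Fin N) ℂ,
      (star a ⬝ᵥ ((Sig0⁻¹ * S * Sig0⁻¹) *ᵥ a)) / (star a ⬝ᵥ (Sig0⁻¹ *ᵥ a)) ^ 2
        = (star a ⬝ᵥ (((Sig0 + (γ : ℂ) • vecMulVec a (star a))⁻¹ * S
              * (Sig0 + (γ : ℂ) • vecMulVec a (star a))⁻¹) *ᵥ a))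
          / (star a ⬝ᵥ ((Sig0 + (γ : ℂ) • vecMulVec a (star a))⁻¹ *ᵥ a)) ^ 2 := by
  intro S
  set Sig : Matrix (Fin N) (Fin N) ℂ := Sig0 + (γ : ℂ) • vecMulVec a (star a) with hSigdef
  set u : Fin N → ℂ := Sig0⁻¹ *ᵥ a with hu
  set q : ℂ := star a ⬝ᵥ u with hq
  -- key : sesquilinear with hermitian matrix
  have key : ∀ (M : Matrix (Fin N) (Fin N) ℂ), M.IsHermitian → ∀ w,
      star a ⬝ᵥ (M *ᵥ w) = star (M *ᵥ a) ⬝ᵥ w := by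
    intro M hM w
    rw [dotProduct_mulVec, star_mulVec, hM.eq]
  have h0inv : (Sig0⁻¹).IsHermitian := hherm.inv
  have hstar : ∀ x y : Fin N → ℂ, star (x ⬝ᵥ y) = star x ⬝ᵥ star y := by
    intro x y
    simp [dotProduct, mul_comm]
  have hSigherm : Sig.IsHermitian := by
    show Sigᴴ = Sig
    ext i j
    simp [hSigdef, conjTranspose_apply, vecMulVec_apply, hherm.apply]
    exact Or.inl (mul_comm _ _)
  have hSinv : (Sig⁻¹).IsHermitian := hSigherm.inv
  have hqreal : star q = q := by
    rw [hq, hstar, star_star]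
    conv_rhs => rw [hu, key _ h0inv a, ← hu]
    rw [dotProduct_comm]
  set c : ℂ := (1 + (γ : ℂ) * q)⁻¹ with hc
  have hcne : c ≠ 0 := inv_ne_zero hden
  have hcreal : star c = c := by
    rw [hc]
    simp [hqreal]
  have hAu : vecMulVec a (star a) *ᵥ u = q • a := by
    ext i
    simp [vecMulVec_apply, mulVec, dotProduct, hq, Finset.mul_sum, mul_comm, mul_assoc,
      mul_left_comm]
  have hSig0u : Sig0 *ᵥ u = a := by
    rw [hu, mulVec_mulVec, mul_nonsing_inv _ hSig0, one_mulVec]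
  have hSigu : Sig *ᵥ (c • u) = a := by
    rw [mulVec_smul, hSigdef, add_mulVec, smul_mulVec, hAu, hSig0u, smul_smul]
    have h1 : a + ((γ : ℂ) * q) • a = (1 + (γ : ℂ) * q) • a := by
      rw [add_smul, one_smul]
    rw [h1, smul_smul, hc, inv_mul_cancel₀ hden, one_smul]
  have hinva : Sig⁻¹ *ᵥ a = c • u := by
    rw [← hSigu, mulVec_mulVec, nonsing_inv_mul _ hSig, one_mulVec]
  have hden2 : star a ⬝ᵥ (Sig⁻¹ *ᵥ a) = c * q := by
    rw [hinva, dotProduct_smul, smul_eq_mul, ← hq]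
  have hnum0 : star a ⬝ᵥ ((Sig0⁻¹ * S * Sig0⁻¹) *ᵥ a)
      = star u ⬝ᵥ (S *ᵥ u) := by
    rw [← mulVec_mulVec, ← mulVec_mulVec, key _ h0inv, ← hu]
  have hnum : star a ⬝ᵥ ((Sig⁻¹ * S * Sig⁻¹) *ᵥ a)
      = c * c * (star u ⬝ᵥ (S *ᵥ u)) := by
    rw [← mulVec_mulVec, ← mulVec_mulVec, key _ hSinv, hinva, star_smul, hcreal,
      smul_dotProduct, mulVec_smul, dotProduct_smul, smul_eq_mul, smul_eq_mul]
    ring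
  rw [hnum0, hnum, hden2]
  field_simp
end

section
/- Let N be a positive integer, let Σ, S ∈ ℂ^{N×N} with Σ invertible, let a ∈ ℂ^N and γ ∈ ℂ, and suppose that Σᵢ := Σ − γ·(a aᴴ) is invertible, that aᴴ Σ⁻¹ a ≠ 0 and aᴴ Σᵢ⁻¹ a ≠ 0, and that the likelihood equation aᴴ Σ⁻¹ S Σ⁻¹ a = aᴴ Σ⁻¹ a holds, and that 1 − γ·(aᴴ Σ⁻¹ a) ≠ 0. Then γ = (aᴴ Σ⁻¹ S Σ⁻¹ a) / (aᴴ Σ⁻¹ a)² − 1 / (aᴴ Σᵢ⁻¹ a). -/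
open Matrix

/-- Signal-power part of the fixed-point characterization in Lemma 1 of the paper
(eq. (14)): under the likelihood equation `aᴴ Σ⁻¹ S Σ⁻¹ a = aᴴ Σ⁻¹ a`, the power `γ`
satisfies `γ = aᴴ Σ⁻¹ S Σ⁻¹ a / (aᴴ Σ⁻¹ a)² − 1/(aᴴ Σᵢ⁻¹ a)`. -/
theorem stmt_5 (N : ℕ) (hN : 0 < N)
    (Sig S : Matrix (Fin N) (Fin N) ℂ) (hSig : IsUnit Sig.det)
    (a : Fin N → ℂ) (γ : ℂ)
    (hSigi : IsUnit (Sig - γ • vecMulVec a (star a)).det)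
    (ha : star a ⬝ᵥ (Sig⁻¹ *ᵥ a) ≠ 0)
    (hai : star a ⬝ᵥ ((Sig - γ • vecMulVec a (star a))⁻¹ *ᵥ a) ≠ 0)
    (hle : star a ⬝ᵥ ((Sig⁻¹ * S * Sig⁻¹) *ᵥ a) = star a ⬝ᵥ (Sig⁻¹ *ᵥ a))
    (hden : 1 - γ * (star a ⬝ᵥ (Sig⁻¹ *ᵥ a)) ≠ 0) :
    γ = (star a ⬝ᵥ ((Sig⁻¹ * S * Sig⁻¹) *ᵥ a)) / (star a ⬝ᵥ (Sig⁻¹ *ᵥ a)) ^ 2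
        - 1 / (star a ⬝ᵥ ((Sig - γ • vecMulVec a (star a))⁻¹ *ᵥ a)) := by
  set Sigi := Sig - γ • vecMulVec a (star a) with hSi
  set q : ℂ := star a ⬝ᵥ (Sig⁻¹ *ᵥ a) with hq
  -- Σᵢ *ᵥ (Σ⁻¹ *ᵥ a) = (1 - γ q) • a
  have key : Sigi *ᵥ (Sig⁻¹ *ᵥ a) = (1 - γ * q) • a := by
    have h1 : (vecMulVec a (star a)) *ᵥ (Sig⁻¹ *ᵥ a) = q • a := by
      ext i
      simp only [vecMulVec_apply, mulVec, dotProduct, Pi.star_apply, RCLike.star_def, hq,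
        Finset.mul_sum, Finset.sum_mul, Pi.smul_apply, smul_eq_mul]
      refine Finset.sum_congr rfl fun x _ => Finset.sum_congr rfl fun y _ => by ring
    have h2 : Sig *ᵥ (Sig⁻¹ *ᵥ a) = a := by
      rw [mulVec_mulVec, Matrix.mul_nonsing_inv Sig hSig, one_mulVec]
    rw [hSi, sub_mulVec, smul_mulVec, h1, h2]
    ext i
    simp [sub_smul, smul_smul]
    ring
  -- hence Σᵢ⁻¹ *ᵥ a = (1 - γ q)⁻¹ • (Σ⁻¹ *ᵥ a)
  have inv_eq : Sigi⁻¹ *ᵥ a = (1 - γ * q)⁻¹ • (Sig⁻¹ *ᵥ a) := by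
    have := congrArg (fun v => Sigi⁻¹ *ᵥ v) key
    simp only [mulVec_mulVec, mulVec_smul] at this
    rw [← Matrix.mul_assoc, Matrix.nonsing_inv_mul Sigi hSigi, Matrix.one_mul] at this
    rw [this, smul_smul, inv_mul_cancel₀ hden, one_smul]
  have hqi : star a ⬝ᵥ (Sigi⁻¹ *ᵥ a) = (1 - γ * q)⁻¹ * q := by
    rw [inv_eq, dotProduct_smul, smul_eq_mul]
  rw [hle, hqi]
  field_simp
  ring
end

section
/- Let N be a positive integer, let Σ₀, S ∈ ℂ^{N×N} be Hermitian, let a ∈ ℂ^N, and let t₀ ∈ ℝ be such that Σ := Σ₀ + t₀·(a aᴴ) is positive definite. Define ℓ(t) := Re(trace((Σ₀ + t·(a aᴴ))⁻¹ * S)) + Real.log (Re(det(Σ₀ + t·(a aᴴ)))). Then ℓ has derivative Re(−aᴴ Σ⁻¹ S Σ⁻¹ a + aᴴ Σ⁻¹ a) at t₀. -/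
/-!
Both terms are differentiated along the line `t ↦ Σ₀ + t a aᴴ` by matrix calculus. The trace
term uses `(P⁻¹)' = -P⁻¹ P' P⁻¹`, the derivative of inversion in the Banach algebra of matrices,
and contributes `-tr(Σ⁻¹ a aᴴ Σ⁻¹ S) = -aᴴ Σ⁻¹ S Σ⁻¹ a`. For the determinant, the matrix
determinant lemma `det(Σ + s a aᴴ) = det Σ · (1 + s aᴴ Σ⁻¹ a)` makes `det` affine in `t`; as `Σ`
is positive definite, `det Σ` is a positive real, so `log Re det` has derivative `Re(aᴴ Σ⁻¹ a)`.
-/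

open Matrix
open scoped ComplexOrder

theorem Matrix.det_add_vecMulVec {n R : Type*} [Fintype n] [DecidableEq n] [CommRing R]
    {A : Matrix n n R} (hA : IsUnit A.det) (u v : n → R) :
    (A + vecMulVec u v).det = A.det * (1 + v ⬝ᵥ (A⁻¹ *ᵥ u)) := by
  rw [vecMulVec_eq Unit, det_add_replicateCol_mul_replicateRow hA, Matrix.mul_assoc,
    ← replicateCol_mulVec, det_unique (1 + _ : Matrix Unit Unit R), add_apply, one_apply_eq,
    replicateRow_mul_replicateCol_apply]

theorem Matrix.trace_mul_vecMulVec_mul {n R : Type*} [Fintype n] [CommRing R]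
    (X Y : Matrix n n R) (u v : n → R) :
    trace (X * vecMulVec u v * Y) = v ⬝ᵥ ((Y * X) *ᵥ u) := by
  rw [trace_mul_comm, ← Matrix.mul_assoc, mul_vecMulVec, trace_vecMulVec, dotProduct_comm]

theorem HasDerivAt.complex_re {f : ℝ → ℂ} {f' : ℂ} {t : ℝ} (hf : HasDerivAt f f' t) :
    HasDerivAt (fun t => (f t).re) f'.re t :=
  Complex.reCLM.hasFDerivAt.comp_hasDerivAt t hf

section

-- Any matrix norm induces the product topology in which the statements below are made.
attribute [local instance] Matrix.linftyOpNormedAddCommGroup Matrix.linftyOpNormedSpace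

theorem HasDerivAt.matrix_trace {n 𝕜 E : Type*} [Fintype n] [NontriviallyNormedField 𝕜]
    [NormedAddCommGroup E] [NormedSpace 𝕜 E] {F : 𝕜 → Matrix n n E} {F' : Matrix n n E} {t : 𝕜}
    (hF : HasDerivAt F F' t) : HasDerivAt (fun t => trace (F t)) (trace F') t :=
  ({ traceLinearMap n 𝕜 E with cont := continuous_id.matrix_trace } : Matrix n n E →L[𝕜] E)
    |>.hasFDerivAt.comp_hasDerivAt t hF

end

section

variable {n : Type*} [Fintype n] [DecidableEq n]

attribute [local instance] Matrix.linftyOpNormedRing Matrix.linftyOpNormedAlgebra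

theorem HasDerivAt.matrix_inv {𝕜 R : Type*} [NontriviallyNormedField 𝕜] [NormedCommRing R]
    [NormedAlgebra 𝕜 R] [CompleteSpace R] {P : 𝕜 → Matrix n n R} {P' : Matrix n n R} {t : 𝕜}
    (hP : HasDerivAt P P' t) (h : IsUnit (P t).det) :
    HasDerivAt (fun t => (P t)⁻¹) (-((P t)⁻¹ * P' * (P t)⁻¹)) t := by
  have hu : IsUnit (P t) := (isUnit_iff_isUnit_det _).mpr h
  -- the `linftyOp` norm induces the product uniformity, so completeness transfers
  have : @CompleteSpace (Matrix n n R) PseudoMetricSpace.toUniformSpace :=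
    inferInstanceAs (CompleteSpace (n → n → R))
  have hinv := (hasFDerivAt_ringInverse (𝕜 := 𝕜) hu.unit).comp_hasDerivAt t hP
  simp only [nonsing_inv_eq_ringInverse]
  rw [show -(Ring.inverse (P t) * P' * Ring.inverse (P t)) = _ from ?_]
  · exact hinv
  · simp [← nonsing_inv_eq_ringInverse]

theorem hasDerivAt_trace_inv_add_smul_mul (Sig0 A S : Matrix n n ℂ) {t₀ : ℝ}
    (h : IsUnit (Sig0 + (t₀ : ℂ) • A).det) :
    HasDerivAt (fun t : ℝ => trace ((Sig0 + (t : ℂ) • A)⁻¹ * S))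
      (-trace ((Sig0 + (t₀ : ℂ) • A)⁻¹ * A * (Sig0 + (t₀ : ℂ) • A)⁻¹ * S)) t₀ := by
  have hline : HasDerivAt (fun t : ℝ => Sig0 + (t : ℂ) • A) A t₀ := by
    have := ((hasDerivAt_id t₀).ofReal_comp.smul_const A).const_add Sig0
    rw [Complex.ofReal_one, one_smul] at this
    exact this
  have hprod : HasDerivAt (fun t : ℝ => (Sig0 + (t : ℂ) • A)⁻¹ * S)
      (-((Sig0 + (t₀ : ℂ) • A)⁻¹ * A * (Sig0 + (t₀ : ℂ) • A)⁻¹) * S) t₀ :=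
    (hline.matrix_inv h).mul_const S
  simpa only [Matrix.neg_mul, trace_neg] using hprod.matrix_trace

end

theorem hasDerivAt_det_add_smul_vecMulVec {n : Type*} [Fintype n] [DecidableEq n]
    (Sig0 : Matrix n n ℂ) (u v : n → ℂ) {t₀ : ℝ}
    (h : IsUnit (Sig0 + (t₀ : ℂ) • vecMulVec u v).det) :
    HasDerivAt (fun t : ℝ => (Sig0 + (t : ℂ) • vecMulVec u v).det)
      ((Sig0 + (t₀ : ℂ) • vecMulVec u v).det
        * (v ⬝ᵥ ((Sig0 + (t₀ : ℂ) • vecMulVec u v)⁻¹ *ᵥ u))) t₀ := by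
  set Sig := Sig0 + (t₀ : ℂ) • vecMulVec u v
  have hdet : (fun t : ℝ => (Sig0 + (t : ℂ) • vecMulVec u v).det)
      = fun t : ℝ => Sig.det * (1 + ((t - t₀ : ℝ) : ℂ) * (v ⬝ᵥ (Sig⁻¹ *ᵥ u))) := by
    ext t
    have hline : Sig0 + (t : ℂ) • vecMulVec u v = Sig + vecMulVec (((t - t₀ : ℝ) : ℂ) • u) v := by
      rw [smul_vecMulVec, add_assoc, ← add_smul]
      congr 2
      push_cast
      ring
    rw [hline, det_add_vecMulVec h, mulVec_smul, dotProduct_smul, smul_eq_mul]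
  rw [hdet]
  simpa using ((((hasDerivAt_id t₀).sub_const t₀).ofReal_comp.mul_const
    (v ⬝ᵥ (Sig⁻¹ *ᵥ u))).const_add 1).const_mul Sig.det

theorem stmt_10_general (N : ℕ)
    (Sig0 S : Matrix (Fin N) (Fin N) ℂ)
    (a : Fin N → ℂ) (t₀ : ℝ)
    (hpd : (Sig0 + (t₀ : ℂ) • vecMulVec a (star a)).PosDef) :
    HasDerivAt (fun t : ℝ =>
        (Matrix.trace ((Sig0 + (t : ℂ) • vecMulVec a (star a))⁻¹ * S)).re
          + Real.log ((Sig0 + (t : ℂ) • vecMulVec a (star a)).det.re))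
      ((-(star a ⬝ᵥ (((Sig0 + (t₀ : ℂ) • vecMulVec a (star a))⁻¹ * S
            * (Sig0 + (t₀ : ℂ) • vecMulVec a (star a))⁻¹) *ᵥ a))
          + star a ⬝ᵥ ((Sig0 + (t₀ : ℂ) • vecMulVec a (star a))⁻¹ *ᵥ a)).re) t₀ := by
  have hunit := (isUnit_iff_isUnit_det _).mp hpd.isUnit
  obtain ⟨hdet_pos, hdet_real⟩ := Complex.lt_def.mp hpd.det_pos
  rw [Complex.zero_im] at hdet_real
  have htrace := (hasDerivAt_trace_inv_add_smul_mul Sig0 (vecMulVec a (star a)) S hunit).complex_re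
  have hlogdet := (hasDerivAt_det_add_smul_vecMulVec Sig0 a (star a) hunit).complex_re.log
    hdet_pos.ne'
  refine (htrace.add hlogdet).congr_deriv ?_
  rw [Matrix.mul_assoc _ _ S, trace_mul_vecMulVec_mul, Complex.mul_re, ← hdet_real, zero_mul,
    sub_zero, mul_div_cancel_left₀ _ hdet_pos.ne', Complex.add_re, Complex.neg_re]

/-- The likelihood-equation derivative (eq. (11) of the paper): the negative Gaussian
log-likelihood `ℓ(t) = Re tr((Σ₀ + t a aᴴ)⁻¹ S) + log Re det(Σ₀ + t a aᴴ)` has derivative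
`Re(−aᴴ Σ⁻¹ S Σ⁻¹ a + aᴴ Σ⁻¹ a)` at `t₀`, where `Σ = Σ₀ + t₀ a aᴴ`. -/
theorem stmt_10 (N : ℕ) (hN : 0 < N)
    (Sig0 S : Matrix (Fin N) (Fin N) ℂ)
    (hSig0 : Sig0.IsHermitian) (hS : S.IsHermitian)
    (a : Fin N → ℂ) (t₀ : ℝ)
    (hpd : (Sig0 + (t₀ : ℂ) • vecMulVec a (star a)).PosDef) :
    HasDerivAt (fun t : ℝ =>
        (Matrix.trace ((Sig0 + (t : ℂ) • vecMulVec a (star a))⁻¹ * S)).re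
          + Real.log ((Sig0 + (t : ℂ) • vecMulVec a (star a)).det.re))
      ((-(star a ⬝ᵥ (((Sig0 + (t₀ : ℂ) • vecMulVec a (star a))⁻¹ * S
            * (Sig0 + (t₀ : ℂ) • vecMulVec a (star a))⁻¹) *ᵥ a))
          + star a ⬝ᵥ ((Sig0 + (t₀ : ℂ) • vecMulVec a (star a))⁻¹ *ᵥ a)).re) t₀ :=
  stmt_10_general N Sig0 S a t₀ hpd
end

section
/- Let N be a positive integer, let Σ₀ ∈ ℂ^{N×N} be Hermitian positive definite, let S ∈ ℂ^{N×N} be Hermitian positive semidefinite, and let a ∈ ℂ^N with a ≠ 0. For γ ≥ 0 the matrix Σ₀ + γ·(a aᴴ) is Hermitian positive definite; define ℓᵢ(γ) := Re(trace((Σ₀ + γ·(a aᴴ))⁻¹ * S)) + Real.log (Re(det(Σ₀ + γ·(a aᴴ)))). Let q := Re(aᴴ Σ₀⁻¹ (S − Σ₀) Σ₀⁻¹ a) / (Re(aᴴ Σ₀⁻¹ a))² and γ⋆ := max(q, 0). Then for every γ ≥ 0, ℓᵢ(γ⋆) ≤ ℓᵢ(γ), with strict inequality whenever γ ≠ γ⋆.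 -/
open Matrix
open scoped ComplexOrder

/-!
With `c = aᴴ Σ₀⁻¹ a > 0` and `r = aᴴ Σ₀⁻¹ S Σ₀⁻¹ a`, the matrix determinant lemma and the
Sherman–Morrison formula give `ℓ(γ) = const + log t + k / t` in the variable `t = 1 + γ c ≥ 1`,
where `k = Re r / c`. The function `t ↦ log t + k / t` decreases up to `k` and increases after it,
so on `[1, ∞)` its unique minimiser is `max k 1`; and `1 + q c = k`, so this is `t` at `γ = γ⋆`.
-/

namespace Matrix

variable {n K : Type*} [Fintype n]

theorem trace_mul_vecMulVec_mul_s13 [CommSemiring K] (B C : Matrix n n K) (u v : n → K) :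
    trace (B * vecMulVec u v * C) = v ⬝ᵥ ((C * B) *ᵥ u) := by
  rw [trace_mul_cycle, mul_vecMulVec, trace_vecMulVec, dotProduct_comm]

variable [DecidableEq n]

theorem det_add_smul_vecMulVec [CommRing K] {A : Matrix n n K} (hA : IsUnit A.det) (t : K)
    (u v : n → K) :
    (A + t • vecMulVec u v).det = A.det * (1 + t * (v ⬝ᵥ (A⁻¹ *ᵥ u))) := by
  rw [← smul_vecMulVec, vecMulVec_eq Unit, det_add_replicateCol_mul_replicateRow hA,
    det_unique (1 + _), add_apply, one_apply_eq, Matrix.mul_assoc, ← replicateCol_mulVec,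
    replicateRow_mul_replicateCol_apply, mulVec_smul, dotProduct_smul, smul_eq_mul]

/-- The Sherman–Morrison formula. -/
theorem inv_add_smul_vecMulVec [Field K] {A : Matrix n n K} (hA : IsUnit A.det) {t : K}
    {u v : n → K} (h : 1 + t * (v ⬝ᵥ (A⁻¹ *ᵥ u)) ≠ 0) :
    (A + t • vecMulVec u v)⁻¹
      = A⁻¹ - (t / (1 + t * (v ⬝ᵥ (A⁻¹ *ᵥ u)))) • (A⁻¹ * vecMulVec u v * A⁻¹) := by
  refine inv_eq_right_inv ?_
  set c := v ⬝ᵥ (A⁻¹ *ᵥ u)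
  set W := vecMulVec u v
  have hA_left : A * (A⁻¹ * W * A⁻¹) = W * A⁻¹ := by
    rw [Matrix.mul_assoc, mul_nonsing_inv_cancel_left _ _ hA]
  have hW_left : W * (A⁻¹ * W * A⁻¹) = c • (W * A⁻¹) := by
    rw [← Matrix.mul_assoc, ← Matrix.mul_assoc, vecMulVec_mul, vecMulVec_mul_vecMulVec,
      vecMulVec_smul, ← dotProduct_mulVec, smul_mul_assoc, vecMulVec_mul]
  have hcoef : t - t / (1 + t * c) - t * (t / (1 + t * c) * c) = 0 := by
    field_simp
    ring
  calc (A + t • W) * (A⁻¹ - (t / (1 + t * c)) • (A⁻¹ * W * A⁻¹))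
      = 1 + (t - t / (1 + t * c) - t * (t / (1 + t * c) * c)) • (W * A⁻¹) := by
        simp only [Matrix.add_mul, Matrix.mul_sub, smul_mul_assoc, mul_smul_comm,
          mul_nonsing_inv _ hA, hA_left, hW_left, smul_smul]
        module
    _ = 1 := by rw [hcoef, zero_smul, add_zero]

end Matrix

namespace Real

theorem log_add_div_max_lt {k t : ℝ} (ht : 1 ≤ t) (hne : t ≠ max k 1) :
    log (max k 1) + k / max k 1 < log t + k / t := by
  set s := max k 1
  have hs : 0 < s := lt_of_lt_of_le one_pos (le_max_right k 1)
  have ht0 : 0 < t := by linarith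
  have hlog : log (s / t) < s / t - 1 :=
    log_lt_sub_one_of_pos (by positivity) fun h => hne ((div_eq_one_iff_eq ht0.ne').mp h).symm
  -- `s` lies between `k` and `t`, so `k / t - k / s` is at least `s / t - 1`.
  have hbetween : 0 ≤ (t - s) * (s - k) := by
    rcases le_total k 1 with hk | hk
    · rw [show s = 1 from max_eq_right hk]
      exact mul_nonneg (by linarith) (by linarith)
    · rw [show s = k from max_eq_left hk, sub_self, mul_zero]
  have hgap : 1 - s / t + (k / t - k / s) = (t - s) * (s - k) / (s * t) := by
    field_simp
    ring
  rw [log_div hs.ne' ht0.ne'] at hlog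
  linarith [div_nonneg hbetween (mul_pos hs ht0).le]

theorem log_add_div_max_le {k t : ℝ} (ht : 1 ≤ t) :
    log (max k 1) + k / max k 1 ≤ log t + k / t := by
  rcases eq_or_ne t (max k 1) with rfl | hne
  · rfl
  · exact (log_add_div_max_lt ht hne).le

end Real

theorem re_trace_inv_add_log_det_eq {n : Type*} [Fintype n] [DecidableEq n]
    {A : Matrix n n ℂ} (S : Matrix n n ℂ) {a : n → ℂ} {c d γ : ℝ}
    (hc : star a ⬝ᵥ (A⁻¹ *ᵥ a) = c) (hc0 : 0 < c) (hd : A.det = d) (hd0 : 0 < d) (hγ : 0 ≤ γ) :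
    (trace ((A + (γ : ℂ) • vecMulVec a (star a))⁻¹ * S)).re
        + Real.log (A + (γ : ℂ) • vecMulVec a (star a)).det.re
      = (trace (A⁻¹ * S)).re + Real.log d - (star a ⬝ᵥ ((A⁻¹ * S * A⁻¹) *ᵥ a)).re / c
        + (Real.log (1 + γ * c) + (star a ⬝ᵥ ((A⁻¹ * S * A⁻¹) *ᵥ a)).re / c / (1 + γ * c)) := by
  have hA : IsUnit A.det := by rw [hd]; exact (Complex.ofReal_ne_zero.mpr hd0.ne').isUnit
  have hγc : 0 < 1 + γ * c := by positivity
  have hshift : 1 + (γ : ℂ) * (star a ⬝ᵥ (A⁻¹ *ᵥ a)) = ((1 + γ * c : ℝ) : ℂ) := by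
    rw [hc]; push_cast; ring
  rw [inv_add_smul_vecMulVec hA (by rw [hshift]; exact_mod_cast hγc.ne'),
    det_add_smul_vecMulVec hA, hshift, hd, ← Complex.ofReal_div, Matrix.sub_mul, trace_sub,
    smul_mul_assoc, trace_smul, Matrix.mul_assoc _ A⁻¹ S, trace_mul_vecMulVec_mul_s13, smul_eq_mul,
    Complex.sub_re, Complex.re_ofReal_mul, ← Complex.ofReal_mul, Complex.ofReal_re,
    Real.log_mul hd0.ne' hγc.ne']
  field_simp
  ring

theorem stmt_13_general (N : ℕ)
    (Sig0 : Matrix (Fin N) (Fin N) ℂ) (hSig0 : Sig0.PosDef)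
    (S : Matrix (Fin N) (Fin N) ℂ)
    (a : Fin N → ℂ) (ha : a ≠ 0)
    (ℓ : ℝ → ℝ)
    (hℓ : ∀ γ : ℝ, 0 ≤ γ → ℓ γ = (Matrix.trace ((Sig0 + (γ : ℂ) • vecMulVec a (star a))⁻¹ * S)).re
        + Real.log ((Sig0 + (γ : ℂ) • vecMulVec a (star a)).det.re))
    (q γstar : ℝ)
    (hq : q = (star a ⬝ᵥ ((Sig0⁻¹ * (S - Sig0) * Sig0⁻¹) *ᵥ a)).re
        / ((star a ⬝ᵥ (Sig0⁻¹ *ᵥ a)).re) ^ 2)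
    (hγstar : γstar = max q 0) :
    ∀ γ : ℝ, 0 ≤ γ → (ℓ γstar ≤ ℓ γ ∧ (γ ≠ γstar → ℓ γstar < ℓ γ)) := by
  have hc_pos := hSig0.inv.dotProduct_mulVec_pos ha
  have hd_pos := hSig0.det_pos
  set c := (star a ⬝ᵥ (Sig0⁻¹ *ᵥ a)).re
  set d := Sig0.det.re
  have hc : star a ⬝ᵥ (Sig0⁻¹ *ᵥ a) = c :=
    Complex.eq_re_of_ofReal_le (r := 0) (by simpa using hc_pos.le)
  have hd : Sig0.det = d := Complex.eq_re_of_ofReal_le (r := 0) (by simpa using hd_pos.le)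
  have hc0 : 0 < c := (Complex.pos_iff.mp hc_pos).1
  have hd0 : 0 < d := (Complex.pos_iff.mp hd_pos).1
  set k := (star a ⬝ᵥ ((Sig0⁻¹ * S * Sig0⁻¹) *ᵥ a)).re / c
  have hℓ_closed (γ : ℝ) (hγ : 0 ≤ γ) : ℓ γ = (trace (Sig0⁻¹ * S)).re + Real.log d - k
      + (Real.log (1 + γ * c) + k / (1 + γ * c)) :=
    (hℓ γ hγ).trans (re_trace_inv_add_log_det_eq S hc hc0 hd hd0 hγ)
  have hq_k : 1 + q * c = k := by
    rw [hq, Matrix.mul_sub, Matrix.sub_mul, nonsing_inv_mul _ hd_pos.ne'.isUnit, Matrix.one_mul,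
      sub_mulVec, dotProduct_sub, Complex.sub_re, hc, Complex.ofReal_re]
    simp only [k]
    field_simp
    ring
  have hγstar_k : 1 + γstar * c = max k 1 := by
    rw [hγstar, max_mul_of_nonneg _ _ hc0.le, zero_mul, ← hq_k, add_max, add_zero]
  have hγstar0 : 0 ≤ γstar := hγstar ▸ le_max_right q 0
  intro γ hγ
  have h1γ : 1 ≤ 1 + γ * c := le_add_of_nonneg_right (mul_nonneg hγ hc0.le)
  rw [hℓ_closed γ hγ, hℓ_closed γstar hγstar0, hγstar_k, add_lt_add_iff_left, add_le_add_iff_left]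
  refine ⟨Real.log_add_div_max_le h1γ, fun hne => Real.log_add_div_max_lt h1γ ?_⟩
  rw [← hγstar_k]
  exact fun h => hne (mul_right_cancel₀ hc0.ne' (add_left_cancel h))

/-- Lemma 3 of the paper: the conditional negative log-likelihood
`ℓᵢ(γ) = Re tr((Σ₀ + γ a aᴴ)⁻¹ S) + log Re det(Σ₀ + γ a aᴴ)` over `γ ≥ 0` has the unique
nonnegative minimizer `γ⋆ = max(aᴴ Σ₀⁻¹ (S − Σ₀) Σ₀⁻¹ a / (aᴴ Σ₀⁻¹ a)², 0)` (eq. (28)). -/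
theorem stmt_13 (N : ℕ) (hN : 0 < N)
    (Sig0 : Matrix (Fin N) (Fin N) ℂ) (hSig0 : Sig0.PosDef)
    (S : Matrix (Fin N) (Fin N) ℂ) (hS : S.PosSemidef)
    (a : Fin N → ℂ) (ha : a ≠ 0)
    (ℓ : ℝ → ℝ)
    (hℓ : ∀ γ : ℝ, 0 ≤ γ → ℓ γ = (Matrix.trace ((Sig0 + (γ : ℂ) • vecMulVec a (star a))⁻¹ * S)).re
        + Real.log ((Sig0 + (γ : ℂ) • vecMulVec a (star a)).det.re))
    (q γstar : ℝ)
    (hq : q = (star a ⬝ᵥ ((Sig0⁻¹ * (S - Sig0) * Sig0⁻¹) *ᵥ a)).re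
        / ((star a ⬝ᵥ (Sig0⁻¹ *ᵥ a)).re) ^ 2)
    (hγstar : γstar = max q 0) :
    ∀ γ : ℝ, 0 ≤ γ → (ℓ γstar ≤ ℓ γ ∧ (γ ≠ γstar → ℓ γstar < ℓ γ)) :=
  stmt_13_general N Sig0 hSig0 S a ha ℓ hℓ q γstar hq hγstar
end

section
/- Let N be a positive integer, let Σ ∈ ℂ^{N×N} be Hermitian positive definite, let S ∈ ℂ^{N×N} be Hermitian, let a ∈ ℂ^N, and let γ ∈ ℝ with 1 + γ·Re(aᴴ Σ⁻¹ a) > 0. Then Re(trace((Σ + γ·(a aᴴ))⁻¹ * S)) + Real.log (Re(det(Σ + γ·(a aᴴ)))) = Re(trace(Σ⁻¹ * S)) + Real.log (Re(det Σ)) + Real.log (1 + γ·Re(aᴴ Σ⁻¹ a)) − γ·Re(aᴴ Σ⁻¹ S Σ⁻¹ a) / (1 + γ·Re(aᴴ Σ⁻¹ a)). -/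
open Matrix
open scoped ComplexOrder

/-- trace of `vecMulVec a b * M` equals `b ⬝ᵥ M *ᵥ a`. -/
lemma trace_vecMulVec_mul {N : ℕ} (a b : Fin N → ℂ) (M : Matrix (Fin N) (Fin N) ℂ) :
    Matrix.trace (vecMulVec a b * M) = b ⬝ᵥ (M *ᵥ a) := by
  simp only [Matrix.trace, Matrix.diag, Matrix.mul_apply, vecMulVec_apply, dotProduct,
    Matrix.mulVec, dotProduct]
  rw [Finset.sum_comm]
  congr 1; ext k
  rw [Finset.mul_sum]
  congr 1; ext i
  ring

/-- `vecMulVec a (star a) * M * vecMulVec a (star a) = (star a ⬝ᵥ M *ᵥ a) • vecMulVec a (star a)` -/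
lemma vecMulVec_mul_mul_vecMulVec {N : ℕ} (a : Fin N → ℂ) (M : Matrix (Fin N) (Fin N) ℂ) :
    vecMulVec a (star a) * M * vecMulVec a (star a)
      = (star a ⬝ᵥ (M *ᵥ a)) • vecMulVec a (star a) := by
  ext i j
  simp only [Matrix.mul_apply, vecMulVec_apply, Matrix.smul_apply, smul_eq_mul, dotProduct,
    Matrix.mulVec, dotProduct, Finset.sum_mul, Finset.mul_sum]
  rw [Finset.sum_comm]
  congr 1; ext k
  congr 1; ext l
  simp only [Pi.star_apply]
  ring

/-- Closed-form expression (eq. (22) of the paper) for the change of the negative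
Gaussian log-likelihood under the rank-one update `Σ ↦ Σ + γ a aᴴ`. -/
theorem stmt_15 (N : ℕ) (hN : 0 < N)
    (Sig : Matrix (Fin N) (Fin N) ℂ) (hSig : Sig.PosDef)
    (S : Matrix (Fin N) (Fin N) ℂ) (hS : S.IsHermitian)
    (a : Fin N → ℂ) (γ : ℝ)
    (hden : 0 < 1 + γ * (star a ⬝ᵥ (Sig⁻¹ *ᵥ a)).re) :
    (Matrix.trace ((Sig + (γ : ℂ) • vecMulVec a (star a))⁻¹ * S)).re
        + Real.log ((Sig + (γ : ℂ) • vecMulVec a (star a)).det.re)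
      = (Matrix.trace (Sig⁻¹ * S)).re + Real.log (Sig.det.re)
        + Real.log (1 + γ * (star a ⬝ᵥ (Sig⁻¹ *ᵥ a)).re)
        - γ * (star a ⬝ᵥ ((Sig⁻¹ * S * Sig⁻¹) *ᵥ a)).re
          / (1 + γ * (star a ⬝ᵥ (Sig⁻¹ *ᵥ a)).re) := by
  set A : Matrix (Fin N) (Fin N) ℂ := vecMulVec a (star a) with hA
  set c : ℂ := star a ⬝ᵥ (Sig⁻¹ *ᵥ a) with hc
  set q : ℂ := star a ⬝ᵥ ((Sig⁻¹ * S * Sig⁻¹) *ᵥ a) with hq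
  set d : ℝ := 1 + γ * c.re with hd
  have hdet : IsUnit Sig.det := hSig.det_pos.ne'.isUnit
  have hH : Sig⁻¹.IsHermitian := hSig.isHermitian.inv
  -- c is real
  have hcreal : (c.re : ℂ) = c := by
    rw [← Complex.conj_eq_iff_re]
    show star c = c
    calc star c = star (star a ⬝ᵥ (Sig⁻¹ *ᵥ a)) := by rw [hc]
      _ = star (Sig⁻¹ *ᵥ a) ⬝ᵥ a := (star_dotProduct _ _).symm
      _ = (star a ᵥ* Sig⁻¹ᴴ) ⬝ᵥ a := by rw [star_mulVec]
      _ = (star a ᵥ* Sig⁻¹) ⬝ᵥ a := by rw [hH.eq]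
      _ = star a ⬝ᵥ (Sig⁻¹ *ᵥ a) := (dotProduct_mulVec _ _ _).symm
      _ = c := hc.symm
  have hdc : ((d : ℂ)) = 1 + (γ : ℂ) * c := by
    rw [hd]; push_cast; rw [hcreal]
  have hdpos : 0 < d := hden
  have hdne : (d : ℂ) ≠ 0 := by
    exact_mod_cast (ne_of_gt hdpos)
  -- Sherman–Morrison
  have hAMA := vecMulVec_mul_mul_vecMulVec a Sig⁻¹
  rw [← hA, ← hc] at hAMA
  have hSM : (Sig + (γ : ℂ) • A)⁻¹
      = Sig⁻¹ - ((γ : ℂ) / (d : ℂ)) • (Sig⁻¹ * A * Sig⁻¹) := by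
    apply Matrix.inv_eq_right_inv
    have h1 : Sig * Sig⁻¹ = 1 := Matrix.mul_nonsing_inv Sig hdet
    have e1 : Sig * (Sig⁻¹ * A * Sig⁻¹) = A * Sig⁻¹ := by
      rw [← Matrix.mul_assoc, ← Matrix.mul_assoc, h1, Matrix.one_mul]
    have e2 : A * (Sig⁻¹ * A * Sig⁻¹) = c • (A * Sig⁻¹) := by
      rw [← Matrix.mul_assoc, ← Matrix.mul_assoc, hAMA, Matrix.smul_mul]
    have expand : (Sig + (γ : ℂ) • A) * (Sig⁻¹ - ((γ : ℂ) / (d : ℂ)) • (Sig⁻¹ * A * Sig⁻¹))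
        = 1 + ((γ : ℂ) - (γ : ℂ) / (d : ℂ) - (γ : ℂ) * ((γ : ℂ) / (d : ℂ)) * c) • (A * Sig⁻¹) := by
      simp only [Matrix.add_mul, Matrix.mul_sub, Matrix.smul_mul, Matrix.mul_smul, h1, e1, e2,
        smul_smul]
      module
    rw [expand]
    have : (γ : ℂ) - (γ : ℂ) / (d : ℂ) - (γ : ℂ) * ((γ : ℂ) / (d : ℂ)) * c = 0 := by
      field_simp
      rw [hdc]; ring
    rw [this, zero_smul, add_zero]
  -- determinant
  have hdetSig : (Sig.det.re : ℂ) = Sig.det := by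
    have := hSig.det_pos
    rw [Complex.lt_def] at this
    exact Complex.ext rfl (by simpa using this.2)
  have hdetre : 0 < Sig.det.re := by
    have := hSig.det_pos
    rw [Complex.lt_def] at this
    simpa using this.1
  have hdetformula : (Sig + (γ : ℂ) • A).det = Sig.det * (d : ℂ) := by
    have hAeq : (γ : ℂ) • A = Matrix.replicateCol (Fin 1) ((γ : ℂ) • a) * Matrix.replicateRow (Fin 1) (star a) := by
      rw [hA, vecMulVec_eq (Fin 1) a (star a)]
      ext i j
      simp only [Matrix.mul_apply, Matrix.replicateCol, Matrix.replicateRow, Matrix.of_apply, Matrix.smul_apply,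
        vecMulVec_apply, Finset.univ_unique, Finset.sum_singleton, smul_eq_mul, Pi.smul_apply]
      ring
    rw [hAeq, Matrix.det_add_mul _ _ hdet]
    congr 1
    rw [Matrix.det_fin_one]
    simp only [Matrix.add_apply, Matrix.one_apply_eq, Matrix.mul_apply, Matrix.replicateRow, Matrix.replicateCol,
      Matrix.of_apply]
    rw [hdc]
    congr 1
    simp only [hc, dotProduct, Matrix.mulVec, dotProduct, Finset.mul_sum, Finset.sum_mul,
      Matrix.mul_apply]
    rw [Finset.sum_comm]
    congr 1; ext k
    congr 1; ext l
    simp only [Pi.star_apply, Pi.smul_apply, smul_eq_mul]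
    ring
  -- trace
  have htrace : Matrix.trace ((Sig + (γ : ℂ) • A)⁻¹ * S)
      = Matrix.trace (Sig⁻¹ * S) - ((γ : ℂ) / (d : ℂ)) * q := by
    rw [hSM, Matrix.sub_mul, Matrix.smul_mul, Matrix.trace_sub, Matrix.trace_smul]
    congr 1
    rw [smul_eq_mul]
    congr 1
    have : Sig⁻¹ * A * Sig⁻¹ * S = Sig⁻¹ * (A * (Sig⁻¹ * S)) := by
      rw [Matrix.mul_assoc, Matrix.mul_assoc]
    rw [this, Matrix.trace_mul_comm, ← Matrix.mul_assoc, Matrix.mul_assoc,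
      Matrix.mul_assoc]
    rw [hA, trace_vecMulVec_mul]
    rw [hq]
    congr 2
    rw [Matrix.mul_assoc]
  -- put it together
  rw [htrace, hdetformula]
  have hre1 : (Matrix.trace (Sig⁻¹ * S) - ((γ : ℂ) / (d : ℂ)) * q).re
      = (Matrix.trace (Sig⁻¹ * S)).re - γ / d * q.re := by
    rw [Complex.sub_re]
    congr 1
    have : ((γ : ℂ) / (d : ℂ)) = ((γ / d : ℝ) : ℂ) := by push_cast; ring
    rw [this]
    simp [Complex.mul_re]
  have hre2 : (Sig.det * (d : ℂ)).re = Sig.det.re * d := by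
    rw [← hdetSig, ← Complex.ofReal_mul]
    simp
  rw [hre1, hre2, Real.log_mul (ne_of_gt hdetre) (ne_of_gt hdpos)]
  have : γ / d * q.re = γ * q.re / d := by ring
  rw [this]
  ring
end

section
/- Let N be a positive integer, let Σ ∈ ℂ^{N×N} be Hermitian positive definite, let S ∈ ℂ^{N×N} be Hermitian, and let a ∈ ℂ^N with a ≠ 0. Define γ := Re(aᴴ Σ⁻¹ (S − Σ) Σ⁻¹ a) / (Re(aᴴ Σ⁻¹ a))², and assume γ > 0. Then Re(trace((Σ + γ·(a aᴴ))⁻¹ * S)) + Real.log (Re(det(Σ + γ·(a aᴴ)))) − Re(trace(Σ⁻¹ * S)) − Real.log (Re(det Σ)) = Real.log (1 + γ·Re(aᴴ Σ⁻¹ a)) − γ·Re(aᴴ Σ⁻¹ a). -/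
open Matrix
open scoped ComplexOrder

/-!
By the Sherman–Morrison formula and the matrix determinant lemma, the rank-one update
`Σ ↦ Σ + γ a aᴴ` lowers `tr(Σ⁻¹ S)` by `γ β / (1 + γ α)` and raises `log |Σ|` by `log (1 + γ α)`,
where `α = aᴴ Σ⁻¹ a` and `β = aᴴ Σ⁻¹ S Σ⁻¹ a`. The choice of `γ` says exactly `β = γ α² + α`,
so the trace drops by `γ α`.
-/

namespace Matrix

variable {n : Type*} [Fintype n] [DecidableEq n]

theorem det_add_vecMulVec_s17 {R : Type*} [CommRing R] {A : Matrix n n R} (hA : IsUnit A.det)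
    (u v : n → R) : (A + vecMulVec u v).det = A.det * (1 + v ⬝ᵥ A⁻¹ *ᵥ u) := by
  rw [vecMulVec_eq Unit, det_add_replicateCol_mul_replicateRow hA, ← replicateRow_vecMul,
    det_unique (1 + _ : Matrix Unit Unit R),
    add_apply, one_apply_eq, replicateRow_mul_replicateCol_apply, dotProduct_mulVec]

theorem inv_mul_sub_mul_inv {R : Type*} [CommRing R] {A : Matrix n n R} (hA : IsUnit A.det)
    (S : Matrix n n R) : A⁻¹ * (S - A) * A⁻¹ = A⁻¹ * S * A⁻¹ - A⁻¹ := by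
  rw [Matrix.mul_sub, Matrix.sub_mul, nonsing_inv_mul A hA, Matrix.one_mul]

variable {K : Type*} [Field K]

theorem inv_add_vecMulVec {A : Matrix n n K} (hA : IsUnit A.det) {u v : n → K}
    (h : 1 + v ⬝ᵥ A⁻¹ *ᵥ u ≠ 0) :
    (A + vecMulVec u v)⁻¹
      = A⁻¹ - (1 + v ⬝ᵥ A⁻¹ *ᵥ u)⁻¹ • vecMulVec (A⁻¹ *ᵥ u) (v ᵥ* A⁻¹) := by
  refine inv_eq_right_inv ?_
  have hc : (1 + v ⬝ᵥ A⁻¹ *ᵥ u)⁻¹ * (1 + v ⬝ᵥ A⁻¹ *ᵥ u) = 1 := inv_mul_cancel₀ h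
  rw [Matrix.add_mul, Matrix.mul_sub, Matrix.mul_sub, Matrix.mul_smul, Matrix.mul_smul,
    mul_nonsing_inv A hA, mul_vecMulVec, mulVec_mulVec, mul_nonsing_inv A hA, one_mulVec,
    vecMulVec_mul, vecMulVec_mul_vecMulVec, vecMulVec_smul]
  linear_combination (norm := module) -hc • vecMulVec u (v ᵥ* A⁻¹)

theorem trace_inv_add_vecMulVec_mul {A : Matrix n n K} (hA : IsUnit A.det) {u v : n → K}
    (h : 1 + v ⬝ᵥ A⁻¹ *ᵥ u ≠ 0) (S : Matrix n n K) :
    trace ((A + vecMulVec u v)⁻¹ * S)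
      = trace (A⁻¹ * S) - (1 + v ⬝ᵥ A⁻¹ *ᵥ u)⁻¹ * (v ⬝ᵥ (A⁻¹ * S * A⁻¹) *ᵥ u) := by
  rw [inv_add_vecMulVec hA h, Matrix.sub_mul, trace_sub, Matrix.smul_mul, trace_smul, vecMulVec_mul,
    trace_vecMulVec, smul_eq_mul, dotProduct_comm (A⁻¹ *ᵥ u)]
  simp only [dotProduct_mulVec, vecMul_vecMul]

end Matrix

theorem stmt_17_general (N : ℕ)
    (Sig : Matrix (Fin N) (Fin N) ℂ) (hSig : Sig.PosDef)
    (S : Matrix (Fin N) (Fin N) ℂ)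
    (a : Fin N → ℂ) (ha : a ≠ 0)
    (γ : ℝ)
    (hγ : γ = (star a ⬝ᵥ ((Sig⁻¹ * (S - Sig) * Sig⁻¹) *ᵥ a)).re
        / ((star a ⬝ᵥ (Sig⁻¹ *ᵥ a)).re) ^ 2)
    (hγpos : 0 < γ) :
    (Matrix.trace ((Sig + (γ : ℂ) • vecMulVec a (star a))⁻¹ * S)).re
        + Real.log ((Sig + (γ : ℂ) • vecMulVec a (star a)).det.re)
        - (Matrix.trace (Sig⁻¹ * S)).re - Real.log (Sig.det.re)
      = Real.log (1 + γ * (star a ⬝ᵥ (Sig⁻¹ *ᵥ a)).re)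
        - γ * (star a ⬝ᵥ (Sig⁻¹ *ᵥ a)).re := by
  have hunit : IsUnit Sig.det := hSig.det_pos.ne'.isUnit
  have hα_pos : 0 < star a ⬝ᵥ (Sig⁻¹ *ᵥ a) := hSig.inv.dotProduct_mulVec_pos ha
  set r := (star a ⬝ᵥ (Sig⁻¹ *ᵥ a)).re
  set d := Sig.det.re
  have hα : star a ⬝ᵥ (Sig⁻¹ *ᵥ a) = r :=
    Complex.eq_re_of_ofReal_le (Complex.ofReal_zero ▸ hα_pos.le)
  have hd : Sig.det = d := Complex.eq_re_of_ofReal_le (Complex.ofReal_zero ▸ hSig.det_pos.le)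
  have hr : 0 < r := (Complex.lt_def.mp hα_pos).1
  have hd_pos : 0 < d := (Complex.lt_def.mp hSig.det_pos).1
  have h1 : 0 < 1 + γ * r := by positivity
  have hden : 1 + star a ⬝ᵥ Sig⁻¹ *ᵥ ((γ : ℂ) • a) = ((1 + γ * r : ℝ) : ℂ) := by
    rw [mulVec_smul, dotProduct_smul, hα]
    push_cast
    ring
  have hquad : (star a ⬝ᵥ (Sig⁻¹ * S * Sig⁻¹) *ᵥ a).re = γ * r ^ 2 + r := by
    rw [inv_mul_sub_mul_inv hunit, sub_mulVec, dotProduct_sub, Complex.sub_re] at hγ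
    field_simp at hγ
    linarith
  rw [← smul_vecMulVec, trace_inv_add_vecMulVec_mul hunit (hden ▸ Complex.ofReal_ne_zero.mpr h1.ne'),
    det_add_vecMulVec_s17 hunit, hden, hd, ← Complex.ofReal_mul, Complex.ofReal_re,
    Real.log_mul hd_pos.ne' h1.ne', mulVec_smul, dotProduct_smul, smul_eq_mul, ← Complex.ofReal_inv,
    ← mul_assoc, ← Complex.ofReal_mul, Complex.sub_re, Complex.re_ofReal_mul, hquad]
  field_simp
  ring

/-- Equation (23) of the paper: at the optimal conditional signal power
`γ = aᴴΣ⁻¹(S − Σ)Σ⁻¹a / (aᴴΣ⁻¹a)² > 0`, the sweep error of the CL-OMP algorithm equals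
`log(1 + γ aᴴΣ⁻¹a) − γ aᴴΣ⁻¹a`. -/
theorem stmt_17 (N : ℕ) (hN : 0 < N)
    (Sig : Matrix (Fin N) (Fin N) ℂ) (hSig : Sig.PosDef)
    (S : Matrix (Fin N) (Fin N) ℂ) (hS : S.IsHermitian)
    (a : Fin N → ℂ) (ha : a ≠ 0)
    (γ : ℝ)
    (hγ : γ = (star a ⬝ᵥ ((Sig⁻¹ * (S - Sig) * Sig⁻¹) *ᵥ a)).re
        / ((star a ⬝ᵥ (Sig⁻¹ *ᵥ a)).re) ^ 2)
    (hγpos : 0 < γ) :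
    (Matrix.trace ((Sig + (γ : ℂ) • vecMulVec a (star a))⁻¹ * S)).re
        + Real.log ((Sig + (γ : ℂ) • vecMulVec a (star a)).det.re)
        - (Matrix.trace (Sig⁻¹ * S)).re - Real.log (Sig.det.re)
      = Real.log (1 + γ * (star a ⬝ᵥ (Sig⁻¹ *ᵥ a)).re)
        - γ * (star a ⬝ᵥ (Sig⁻¹ *ᵥ a)).re :=
  stmt_17_general N Sig hSig S a ha γ hγ hγpos
end
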